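/- Let t be a term and R a TRS such that all reductions of t with the parallel-innermost rewrite relation ⇉ are finite. Then Dh(t, ⇉) ≤ max { Σ_{1 ≤ i ≤ k} Dh(⊥(t|πi), ⇉) | ⟨π1,…,πk⟩ ∈ MSDC(t) }, where ⊥(t|πi) denotes a maximal parallel argument normal form of the subterm t|πi. -/

import Mathlib

namespace ParallelComplexity

/-! ## First-order terms -/

inductive Term (σ : Type) (V : Type) : Type where
  | var : V → Term σ V
  | fn : σ → List (Term σ V) → Term σ V

variable {σ V : Type}

mutual
  /-- Application of a substitution to a term. -/
  def Term.subst (θ : V → Term σ V) : Term σ V → Term σ V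
    | Term.var x => θ x
    | Term.fn f ts => Term.fn f (Term.substList θ ts)
  def Term.substList (θ : V → Term σ V) : List (Term σ V) → List (Term σ V)
    | [] => []
    | t :: ts => Term.subst θ t :: Term.substList θ ts
end

mutual
  /-- The size |t| of a term. -/
  def Term.size : Term σ V → ℕ
    | Term.var _ => 1
    | Term.fn _ ts => 1 + Term.sizeList ts
  def Term.sizeList : List (Term σ V) → ℕ
    | [] => 0
    | t :: ts => Term.size t + Term.sizeList ts
end

/-- Subterm `t|π` at a position (positions are lists of argument indices);
`none` if the position is not a position of `t`. -/
def Term.subtermAt : Term σ V → List ℕ → Option (Term σ V)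
  | t, [] => some t
  | Term.var _, _ :: _ => none
  | Term.fn _ ts, i :: π =>
    match ts[i]? with
    | none => none
    | some u => Term.subtermAt u π

/-- `t[s]π`: replacement of the subterm at position `π` by `s`. -/
def Term.replaceAt : Term σ V → List ℕ → Term σ V → Option (Term σ V)
  | _, [], s => some s
  | Term.var _, _ :: _, _ => none
  | Term.fn f ts, i :: π, s =>
    match ts[i]? with
    | none => none
    | some u =>
      match Term.replaceAt u π s with
      | none => none
      | some u' => some (Term.fn f (ts.set i u'))

def Term.isVar (t : Term σ V) : Prop := ∃ x, t = Term.var x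

/-- `x` occurs as a variable in the term. -/
inductive Term.VarIn (x : V) : Term σ V → Prop
  | var : Term.VarIn x (Term.var x)
  | fn {f : σ} {ts : List (Term σ V)} {t : Term σ V} :
      t ∈ ts → Term.VarIn x t → Term.VarIn x (Term.fn f ts)

/-! ## Term rewrite systems -/

structure Rule (σ V : Type) where
  lhs : Term σ V
  rhs : Term σ V

/-- A well-formed TRS: a finite set of rules `ℓ → r` with `ℓ ∉ V` and
`Var(r) ⊆ Var(ℓ)`. -/
def IsWfTRS (R : Set (Rule σ V)) : Prop :=
  R.Finite ∧ (∀ r ∈ R, ¬ r.lhs.isVar) ∧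
    ∀ r ∈ R, ∀ x : V, Term.VarIn x r.rhs → Term.VarIn x r.lhs

def IsRedex (R : Set (Rule σ V)) (t : Term σ V) : Prop :=
  ∃ r ∈ R, ∃ θ : V → Term σ V, t = Term.subst θ r.lhs

/-- An innermost redex: a redex none of whose proper subterms is a redex. -/
def IsInnermostRedex (R : Set (Rule σ V)) (t : Term σ V) : Prop :=
  IsRedex R t ∧
    ∀ π : List ℕ, π ≠ [] → ∀ u, t.subtermAt π = some u → ¬ IsRedex R u

/-- One rewrite step at position `π`. -/
def RewriteAt (R : Set (Rule σ V)) (π : List ℕ) (s t : Term σ V) : Prop :=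
  ∃ r ∈ R, ∃ θ : V → Term σ V,
    s.subtermAt π = some (Term.subst θ r.lhs) ∧
    s.replaceAt π (Term.subst θ r.rhs) = some t

/-- The rewrite relation `s →_R t`. -/
def Rewrite (R : Set (Rule σ V)) (s t : Term σ V) : Prop := ∃ π, RewriteAt R π s t

/-- The innermost rewrite relation `s →i t`. -/
def InnermostRewrite (R : Set (Rule σ V)) (s t : Term σ V) : Prop :=
  ∃ π, ∃ r ∈ R, ∃ θ : V → Term σ V,
    s.subtermAt π = some (Term.subst θ r.lhs) ∧
    IsInnermostRedex R (Term.subst θ r.lhs) ∧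
    s.replaceAt π (Term.subst θ r.rhs) = some t

def NormalForm (R : Set (Rule σ V)) (t : Term σ V) : Prop := ¬ ∃ u, Rewrite R t u

/-- Parallel-innermost rewriting `s ⇉ t`: `s →i⁺ t` and either
(a) `s` is an innermost redex and `s →i t`, or (b) `s = f(s₁,…,sₙ)`,
`t = f(t₁,…,tₙ)` and each `sₖ ⇉ tₖ` or `sₖ = tₖ` is a normal form. -/
inductive ParInnermost (R : Set (Rule σ V)) : Term σ V → Term σ V → Prop
  | redex {s t : Term σ V} :
      Relation.TransGen (InnermostRewrite R) s t →
      IsInnermostRedex R s → InnermostRewrite R s t → ParInnermost R s t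
  | congr (f : σ) (ss ts : List (Term σ V)) :
      Relation.TransGen (InnermostRewrite R) (Term.fn f ss) (Term.fn f ts) →
      ss.length = ts.length →
      -- each `sₖ ⇉ tₖ`, or `sₖ = tₖ` is a normal form (stated as the
      -- classically equivalent implication to satisfy the kernel's
      -- restrictions on nested inductive occurrences)
      (∀ p ∈ ss.zip ts, ¬ (p.1 = p.2 ∧ NormalForm R p.1) → ParInnermost R p.1 p.2) →
      ParInnermost R (Term.fn f ss) (Term.fn f ts)

/-! ## Abstract properties of relations -/

def Confluent {α : Type} (r : α → α → Prop) : Prop :=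
  ∀ s t u, Relation.ReflTransGen r s t → Relation.ReflTransGen r s u →
    ∃ v, Relation.ReflTransGen r t v ∧ Relation.ReflTransGen r u v

def Deterministic {α : Type} (r : α → α → Prop) : Prop :=
  ∀ s t u, r s t → r s u → t = u

def UniformlyConfluent {α : Type} (r : α → α → Prop) : Prop :=
  ∀ s t u, r s t → r s u → t = u ∨ ∃ v, r t v ∧ r u v

/-! ## Derivation height and runtime complexity -/

/-- `e`-th iterate of a relation. -/
def iterRel {α : Type} (r : α → α → Prop) : ℕ → α → α → Prop
  | 0 => fun a b => a = b
  | n + 1 => fun a c => ∃ b, r a b ∧ iterRel r n b c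

/-- Derivation height `Dh(t, →) = sup { e | ∃ t'. t →^e t' } ∈ ℕ ∪ {ω}`. -/
noncomputable def Dh {α : Type} (r : α → α → Prop) (t : α) : ℕ∞ :=
  sSup { e : ℕ∞ | ∃ n : ℕ, e = (n : ℕ∞) ∧ ∃ t', iterRel r n t t' }

/-- Defined symbols: root symbols of left-hand sides. -/
def Defined (R : Set (Rule σ V)) (f : σ) : Prop :=
  ∃ r ∈ R, ∃ ts : List (Term σ V), r.lhs = Term.fn f ts

def HasDefinedRoot (R : Set (Rule σ V)) (t : Term σ V) : Prop :=
  ∃ f ts, t = Term.fn f ts ∧ Defined R f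

/-- Constructor terms: terms over constructor symbols and variables. -/
inductive ConsTerm (R : Set (Rule σ V)) : Term σ V → Prop
  | var (x : V) : ConsTerm R (Term.var x)
  | fn (f : σ) (ts : List (Term σ V)) :
      ¬ Defined R f → (∀ t ∈ ts, ConsTerm R t) → ConsTerm R (Term.fn f ts)

/-- Basic terms: a defined symbol applied to constructor terms. -/
def BasicTerm (R : Set (Rule σ V)) (t : Term σ V) : Prop :=
  ∃ f ts, t = Term.fn f ts ∧ Defined R f ∧ ∀ u ∈ ts, ConsTerm R u

/-- Innermost runtime complexity. -/
noncomputable def irc (R : Set (Rule σ V)) (n : ℕ) : ℕ∞ :=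
  sSup { d : ℕ∞ | ∃ t, BasicTerm R t ∧ t.size ≤ n ∧ d = Dh (InnermostRewrite R) t }

/-- Parallel-innermost runtime complexity. -/
noncomputable def pirc (R : Set (Rule σ V)) (n : ℕ) : ℕ∞ :=
  sSup { d : ℕ∞ | ∃ t, BasicTerm R t ∧ t.size ≤ n ∧ d = Dh (ParInnermost R) t }

/-! ## Critical pairs -/

def RuleVars (r : Rule σ V) : Set V :=
  { x | Term.VarIn x r.lhs ∨ Term.VarIn x r.rhs }

/-- `r₂` is a variant of `r₁` (each is a substitution instance of the other). -/
def IsVariantOf (r₁ r₂ : Rule σ V) : Prop :=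
  ∃ θ₁ θ₂ : V → Term σ V,
    r₂.lhs = Term.subst θ₁ r₁.lhs ∧ r₂.rhs = Term.subst θ₁ r₁.rhs ∧
    r₁.lhs = Term.subst θ₂ r₂.lhs ∧ r₁.rhs = Term.subst θ₂ r₂.rhs

def Unifies (θ : V → Term σ V) (s t : Term σ V) : Prop :=
  Term.subst θ s = Term.subst θ t

def IsMGU (μ : V → Term σ V) (s t : Term σ V) : Prop :=
  Unifies μ s t ∧
    ∀ δ : V → Term σ V, Unifies δ s t →
      ∃ δ' : V → Term σ V, ∀ x : V, Term.subst δ' (μ x) = δ x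

/-- Critical pairs `⟨uσ[rσ]π, vσ⟩` of a TRS, from variable-renamed copies
`ℓ → r` and `u → v` of rules of `R` overlapping at a non-variable position
`π` of `u` (not a root overlap of variants of the same rule). -/
def CriticalPair (R : Set (Rule σ V)) (cp : Term σ V × Term σ V) : Prop :=
  ∃ r₁ r₂ r₁' r₂' : Rule σ V, r₁' ∈ R ∧ r₂' ∈ R ∧
    IsVariantOf r₁' r₁ ∧ IsVariantOf r₂' r₂ ∧
    (∀ x : V, x ∈ RuleVars r₁ → x ∉ RuleVars r₂) ∧
    ∃ (π : List ℕ) (u' : Term σ V),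
      r₂.lhs.subtermAt π = some u' ∧ ¬ u'.isVar ∧
      (π = [] → ¬ IsVariantOf r₁ r₂) ∧
      ∃ μ : V → Term σ V, IsMGU μ r₁.lhs u' ∧
        ∃ w : Term σ V,
          (Term.subst μ r₂.lhs).replaceAt π (Term.subst μ r₁.rhs) = some w ∧
          cp = (w, Term.subst μ r₂.rhs)

/-- `R` is non-overlapping iff it has no critical pairs. -/
def NonOverlapping (R : Set (Rule σ V)) : Prop := ∀ cp, ¬ CriticalPair R cp

/-- An innermost critical overlay: a critical pair at the root position whose
critical peak consists of two innermost rewrite steps. -/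
def InnermostCriticalOverlay (R : Set (Rule σ V)) (cp : Term σ V × Term σ V) : Prop :=
  ∃ r₁ r₂ r₁' r₂' : Rule σ V, r₁' ∈ R ∧ r₂' ∈ R ∧
    IsVariantOf r₁' r₁ ∧ IsVariantOf r₂' r₂ ∧
    (∀ x : V, x ∈ RuleVars r₁ → x ∉ RuleVars r₂) ∧
    ¬ IsVariantOf r₁ r₂ ∧
    ∃ μ : V → Term σ V, IsMGU μ r₁.lhs r₂.lhs ∧
      IsInnermostRedex R (Term.subst μ r₂.lhs) ∧
      cp = (Term.subst μ r₁.rhs, Term.subst μ r₂.rhs)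

/-! ## Positions with defined symbols and structural dependency chains -/

/-- Strict prefix order on positions: `PosGT τ π` iff `τ > π`,
i.e. `∃ π' ≠ ε, π π' = τ`. -/
def PosGT (τ π : List ℕ) : Prop := ∃ π' : List ℕ, π' ≠ [] ∧ π ++ π' = τ

/-- `PosD(t)`: positions of `t` with defined root symbol. -/
def PosD (R : Set (Rule σ V)) (t : Term σ V) : Set (List ℕ) :=
  { π | ∃ u, t.subtermAt π = some u ∧ HasDefinedRoot R u }

/-- Structural dependency chain `⟨π₁,…,πₖ⟩` for `t`: positions in `PosD(t)`
with `π₁ > … > πₖ`. -/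
def SDChain (R : Set (Rule σ V)) (t : Term σ V) (c : List (List ℕ)) : Prop :=
  (∀ π ∈ c, π ∈ PosD R t) ∧ c.Chain' PosGT

/-- Maximal structural dependency chains: `MSDC R t c` iff `c` is a maximal
structural dependency chain for `t`. -/
def MSDC (R : Set (Rule σ V)) (t : Term σ V) (c : List (List ℕ)) : Prop :=
  SDChain R t c ∧
    ((c = [] ∧ PosD R t = ∅) ∨
      ∃ (π₁ : List ℕ) (rest : List (List ℕ)), c = π₁ :: rest ∧
        ∀ π ∈ PosD R t, ¬ PosGT π π₁ ∧ (PosGT π₁ π → π ∈ rest))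

/-! ## Sharp terms, dependency tuples -/

/-- Extended signature: base symbols, sharp symbols `f#`, compound symbols `Com_n`. -/
inductive SharpSym (σ : Type) : Type where
  | base : σ → SharpSym σ
  | sharp : σ → SharpSym σ
  | com : ℕ → SharpSym σ

mutual
  def Term.embed : Term σ V → Term (SharpSym σ) V
    | Term.var x => Term.var x
    | Term.fn f ts => Term.fn (SharpSym.base f) (Term.embedList ts)
  def Term.embedList : List (Term σ V) → List (Term (SharpSym σ) V)
    | [] => []
    | t :: ts => Term.embed t :: Term.embedList ts
end

open Classical in
/-- `t#`: mark the root of `t` with its sharp symbol (if defined). -/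
noncomputable def Term.sharp (R : Set (Rule σ V)) : Term σ V → Term (SharpSym σ) V
  | Term.var x => Term.var x
  | Term.fn f ts =>
    if Defined R f then Term.fn (SharpSym.sharp f) (Term.embedList ts)
    else Term.fn (SharpSym.base f) (Term.embedList ts)

open Classical in
/-- Sharping on terms over the extended signature: for `t = f(…)` with `f` a
defined (base) symbol of `R`, mark the root; otherwise `t# = t`. -/
noncomputable def sharpC (R : Set (Rule σ V)) : Term (SharpSym σ) V → Term (SharpSym σ) V
  | Term.fn (SharpSym.base f) ts =>
    if Defined R f then Term.fn (SharpSym.sharp f) ts else Term.fn (SharpSym.base f) ts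
  | t => t

def liftRule (r : Rule σ V) : Rule (SharpSym σ) V :=
  { lhs := r.lhs.embed, rhs := r.rhs.embed }

def liftRules (R : Set (Rule σ V)) : Set (Rule (SharpSym σ) V) := liftRule '' R

/-- The dependency tuple `ℓ# → Com_k(u₁#,…,uₖ#)` built from subterms `u₁,…,uₖ`
of the right-hand side. -/
noncomputable def mkDT (R : Set (Rule σ V)) (ρ : Rule σ V) (us : List (Term σ V)) :
    Rule (SharpSym σ) V :=
  { lhs := Term.sharp R ρ.lhs,
    rhs := Term.fn (SharpSym.com us.length) (us.map (Term.sharp R)) }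

/-- `DTpar(ℓ → r)`: one dependency tuple per maximal structural dependency chain. -/
def DTparRule (R : Set (Rule σ V)) (ρ : Rule σ V) : Set (Rule (SharpSym σ) V) :=
  { d | ∃ (c : List (List ℕ)) (us : List (Term σ V)),
      MSDC R ρ.rhs c ∧
      List.Forall₂ (fun π u => ρ.rhs.subtermAt π = some u) c us ∧
      d = mkDT R ρ us }

/-- `DTpar(R)`. -/
def DTparSet (R : Set (Rule σ V)) : Set (Rule (SharpSym σ) V) :=
  ⋃ ρ ∈ R, DTparRule R ρ

/-! ## Chain trees and Cplx -/

/-- A (possibly infinite, finitely branching) tree whose nodes (addressed by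
paths) are labelled with a dependency tuple and a substitution; the child at
direction `i` corresponds to argument `i` of the `Com` symbol. -/
structure ChainTree (σ V : Type) where
  label : List ℕ → Option (Rule (SharpSym σ) V × (V → Term (SharpSym σ) V))

/-- `T` is a `(D,R)`-chain tree for the sharp term `t`. -/
def IsChainTree (D R : Set (Rule (SharpSym σ) V)) (T : ChainTree σ V)
    (t : Term (SharpSym σ) V) : Prop :=
  (∃ r ν, T.label [] = some (r, ν) ∧ Term.subst ν r.lhs = t) ∧
  (∀ (p : List ℕ) (i : ℕ), T.label (p ++ [i]) ≠ none → T.label p ≠ none) ∧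
  (∀ (p : List ℕ) (r : Rule (SharpSym σ) V) (ν : V → Term (SharpSym σ) V),
    T.label p = some (r, ν) →
      r ∈ D ∧ NormalForm R (Term.subst ν r.lhs) ∧
      ∀ (i : ℕ) (r' : Rule (SharpSym σ) V) (δ : V → Term (SharpSym σ) V),
        T.label (p ++ [i]) = some (r', δ) →
          ∃ (m : ℕ) (vs : List (Term (SharpSym σ) V)),
            r.rhs = Term.fn (SharpSym.com m) vs ∧
            ∃ v, vs[i]? = some v ∧
              Relation.ReflTransGen (InnermostRewrite R)
                (Term.subst ν v) (Term.subst δ r'.lhs))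

/-- `|T|_S`: the number of nodes of `T` labelled with a DT from `S`. -/
noncomputable def treeCount (T : ChainTree σ V) (S : Set (Rule (SharpSym σ) V)) : ℕ∞ :=
  Set.encard { p : List ℕ | ∃ r ν, T.label p = some (r, ν) ∧ r ∈ S }

/-- `Cplx⟨D,S,R⟩(t)`: the supremum of `|T|_S` over all `(D,R)`-chain trees `T`
for `t` (`0` if there is no chain tree). -/
noncomputable def Cplx (D S R : Set (Rule (SharpSym σ) V))
    (t : Term (SharpSym σ) V) : ℕ∞ :=
  sSup { c : ℕ∞ | ∃ T : ChainTree σ V, IsChainTree D R T t ∧ c = treeCount T S }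

/-- `irc⟨D,S,R⟩(n)`: runtime complexity of a DT problem. -/
noncomputable def ircDTP (D S : Set (Rule (SharpSym σ) V)) (R : Set (Rule σ V))
    (n : ℕ) : ℕ∞ :=
  sSup { c : ℕ∞ | ∃ t : Term σ V, BasicTerm R t ∧ t.size ≤ n ∧
    c = Cplx D S (liftRules R) (Term.sharp R t) }

/-! ## Relative rewriting -/

/-- An innermost rewrite step using a rule from `X`, with innermost-ness
relative to the whole system `W`. -/
def InnermostRewriteSub (W X : Set (Rule σ V)) (s t : Term σ V) : Prop :=
  ∃ π, ∃ r ∈ X, ∃ θ : V → Term σ V,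
    s.subtermAt π = some (Term.subst θ r.lhs) ∧
    IsInnermostRedex W (Term.subst θ r.lhs) ∧
    s.replaceAt π (Term.subst θ r.rhs) = some t

/-- Innermost relative rewriting `→i_{A/B}`:
`s →B* s' →A s'' →B* t`, all steps innermost wrt `A ∪ B`. -/
def RelInnermost (A B : Set (Rule σ V)) (s t : Term σ V) : Prop :=
  ∃ s' s'' : Term σ V,
    Relation.ReflTransGen (InnermostRewriteSub (A ∪ B) B) s s' ∧
    InnermostRewriteSub (A ∪ B) A s' s'' ∧
    Relation.ReflTransGen (InnermostRewriteSub (A ∪ B) B) s'' t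

/-- Innermost runtime complexity of a relative TRS `A/B`. -/
noncomputable def ircRel (A B : Set (Rule σ V)) (n : ℕ) : ℕ∞ :=
  sSup { d : ℕ∞ | ∃ t : Term σ V, BasicTerm (A ∪ B) t ∧ t.size ≤ n ∧
    d = Dh (RelInnermost A B) t }

/-! ## Dependency tuples (abstract DT problems) -/

inductive IsBaseTerm : Term (SharpSym σ) V → Prop
  | var (x : V) : IsBaseTerm (Term.var x)
  | fn (f : σ) (ts : List (Term (SharpSym σ) V)) :
      (∀ t ∈ ts, IsBaseTerm t) → IsBaseTerm (Term.fn (SharpSym.base f) ts)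

def IsSharpTerm (t : Term (SharpSym σ) V) : Prop :=
  ∃ (f : σ) (args : List (Term (SharpSym σ) V)),
    t = Term.fn (SharpSym.sharp f) args ∧ ∀ a ∈ args, IsBaseTerm a

/-- A dependency tuple: a rule `s# → Com_n(t₁#,…,tₙ#)`. -/
def IsDT (r : Rule (SharpSym σ) V) : Prop :=
  IsSharpTerm r.lhs ∧
    ∃ (n : ℕ) (ts : List (Term (SharpSym σ) V)),
      r.rhs = Term.fn (SharpSym.com n) ts ∧ ts.length = n ∧ ∀ t ∈ ts, IsSharpTerm t

/-! ## Argument normal forms -/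

/-- Argument normal form: a variable, or a term all of whose direct arguments
are normal forms. -/
def ArgNF (R : Set (Rule σ V)) (t : Term σ V) : Prop :=
  (∃ x, t = Term.var x) ∨ ∃ f ts, t = Term.fn f ts ∧ ∀ u ∈ ts, NormalForm R u

/-- A parallel-innermost step all of whose rewrites are at positions strictly
below the root. -/
def ParInnermostBelow (R : Set (Rule σ V)) (s t : Term σ V) : Prop :=
  ParInnermost R s t ∧ ¬ IsInnermostRedex R s

/-- `b` is a maximal parallel argument normal form of `u`. -/
noncomputable def MaxANF (R : Set (Rule σ V)) (u b : Term σ V) : Prop :=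
  ArgNF R b ∧ Relation.ReflTransGen (ParInnermostBelow R) u b ∧
    ∀ u', ArgNF R u' → Relation.ReflTransGen (ParInnermostBelow R) u u' →
      Dh (ParInnermost R) u' ≤ Dh (ParInnermost R) b

/-! ## Many-sorted type assignments -/

/-- Well-typedness of a term wrt a sort set `St`, a type assignment `arty`
(argument sorts and result sort for each symbol) and variable typing `vty`. -/
inductive WellTyped {τ : Type} (St : Type) (arty : τ → List St × St) (vty : V → St) :
    Term τ V → St → Prop
  | var (x : V) : WellTyped St arty vty (Term.var x) (vty x)
  | fn (f : τ) (ts : List (Term τ V)) :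
      ts.length = (arty f).1.length →
      (∀ p ∈ ts.zip (arty f).1, WellTyped St arty vty p.1 p.2) →
      WellTyped St arty vty (Term.fn f ts) (arty f).2

/-- A strict total order on positions extending the strict prefix order. -/
def TotalExtOfPrefix (gt' : List ℕ → List ℕ → Prop) : Prop :=
  (∀ π τ, PosGT π τ → gt' π τ) ∧
  (∀ π τ ρ, gt' π τ → gt' τ ρ → gt' π ρ) ∧
  (∀ π τ, gt' π τ → ¬ gt' τ π) ∧
  (∀ π τ, π ≠ τ → gt' π τ ∨ gt' τ π)



/-!
The proof is by induction on `t = f(s₁,…,sₙ)`. A `⇉`-derivation of `t` first makes steps strictly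
below the root and, once it rewrites at the root, continues from an argument normal form reachable
from `t`, whose derivation height is at most that of `⊥t`. Steps below the root rewrite all
non-normal arguments in parallel, so `m` of them yield an `m`-step derivation of a single argument
`sₖ`, whose length is by induction bounded by the sum along a maximal chain of `sₖ`. Prefixing its
positions by `k`, and appending the root if `f` is defined, gives a maximal chain of `t` whose sum
also accounts for `⊥t`. Maximal argument normal forms exist because `Dh(t, ⇉)` is finite: `⇉` is
finitely branching, so this follows from termination by König's lemma.
-/

theorem _root_.List.Forall₂.exists_of_mem_left {α β : Type} {P : α → β → Prop} {l₁ : List α}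
    {l₂ : List β} (h : List.Forall₂ P l₁ l₂) {a : α} (ha : a ∈ l₁) : ∃ b ∈ l₂, P a b := by
  induction h with
  | nil => cases ha
  | cons hab _ ih =>
    rcases List.mem_cons.mp ha with rfl | ha
    · exact ⟨_, List.mem_cons_self, hab⟩
    · obtain ⟨b, hb, hab⟩ := ih ha
      exact ⟨b, List.mem_cons_of_mem _ hb, hab⟩

theorem _root_.List.Forall₂.exists_of_mem_right {α β : Type} {P : α → β → Prop} {l₁ : List α}
    {l₂ : List β} (h : List.Forall₂ P l₁ l₂) {b : β} (hb : b ∈ l₂) : ∃ a ∈ l₁, P a b :=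
  (List.Forall₂.flip (R := flip P) h).exists_of_mem_left hb

theorem _root_.List.exists_forall₂_of_forall_mem {α β : Type} {P : α → β → Prop} {l : List α}
    (h : ∀ a ∈ l, ∃ b, P a b) : ∃ l', List.Forall₂ P l l' := by
  induction l with
  | nil => exact ⟨[], .nil⟩
  | cons a l ih =>
    obtain ⟨b, hb⟩ := h a List.mem_cons_self
    obtain ⟨l', hl'⟩ := ih fun x hx => h x (List.mem_cons_of_mem a hx)
    exact ⟨b :: l', .cons hb hl'⟩

theorem _root_.List.finite_setOf_forall₂ {α β : Type} {P : α → β → Prop} {l : List α}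
    (h : ∀ a ∈ l, {b | P a b}.Finite) : {l' | List.Forall₂ P l l'}.Finite := by
  induction l with
  | nil => exact (Set.finite_singleton []).subset fun l' hl' => List.forall₂_nil_left_iff.mp hl'
  | cons a l ih =>
    refine ((h a List.mem_cons_self).image2 List.cons
      (ih fun x hx => h x (List.mem_cons_of_mem a hx))).subset ?_
    rintro _ (_ | ⟨hab, hl⟩)
    exact Set.mem_image2_of_mem hab hl

section DerivationHeight

variable {α : Type} {r : α → α → Prop}

theorem iterRel_add {m n : ℕ} {a b c : α} (hab : iterRel r m a b) (hbc : iterRel r n b c) :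
    iterRel r (m + n) a c := by
  induction m generalizing a with
  | zero => cases hab; simpa using hbc
  | succ m ih =>
    obtain ⟨a', haa', ha'b⟩ := hab
    rw [Nat.add_right_comm]
    exact ⟨a', haa', ih ha'b⟩

theorem reflTransGen_iff_exists_iterRel {a b : α} :
    Relation.ReflTransGen r a b ↔ ∃ n, iterRel r n a b := by
  constructor
  · intro h
    induction h using Relation.ReflTransGen.head_induction_on with
    | refl => exact ⟨0, rfl⟩
    | head hac _ ih =>
      obtain ⟨n, hn⟩ := ih
      exact ⟨n + 1, _, hac, hn⟩
  · rintro ⟨n, hn⟩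
    induction n generalizing a with
    | zero => cases hn; rfl
    | succ n ih =>
      obtain ⟨c, hac, hcb⟩ := hn
      exact .head hac (ih hcb)

theorem le_Dh_of_iterRel {n : ℕ} {a b : α} (h : iterRel r n a b) : (n : ℕ∞) ≤ Dh r a :=
  le_sSup ⟨n, rfl, b, h⟩

theorem Dh_le_iff {a : α} {d : ℕ∞} :
    Dh r a ≤ d ↔ ∀ n b, iterRel r n a b → (n : ℕ∞) ≤ d := by
  refine ⟨fun h n b hn => (le_Dh_of_iterRel hn).trans h, fun h => sSup_le ?_⟩
  rintro e ⟨n, rfl, b, hn⟩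
  exact h n b hn

theorem Dh_le_of_reflTransGen {a b : α} (h : Relation.ReflTransGen r a b) : Dh r b ≤ Dh r a := by
  obtain ⟨m, hm⟩ := reflTransGen_iff_exists_iterRel.mp h
  refine Dh_le_iff.mpr fun n c hn => ?_
  calc (n : ℕ∞) ≤ (m + n : ℕ) := by exact_mod_cast Nat.le_add_left n m
    _ ≤ Dh r a := le_Dh_of_iterRel (iterRel_add hm hn)

theorem Dh_add_one_le {a b : α} (h : r a b) : Dh r b + 1 ≤ Dh r a := by
  have hne : {e : ℕ∞ | ∃ n : ℕ, e = n ∧ ∃ c, iterRel r n b c}.Nonempty := ⟨0, 0, by simp, b, rfl⟩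
  rw [Dh, ENat.sSup_add hne]
  refine iSup₂_le ?_
  rintro e ⟨n, rfl, c, hn⟩
  exact_mod_cast le_Dh_of_iterRel (n := n + 1) ⟨b, h, hn⟩

theorem Dh_lt_of_rel {a b : α} (h : r a b) (ha : Dh r a ≠ ⊤) : Dh r b < Dh r a :=
  have hb : Dh r b ≠ ⊤ := ne_top_of_le_ne_top ha (le_self_add.trans (Dh_add_one_le h))
  ((ENat.lt_add_one_iff hb).mpr le_rfl).trans_le (Dh_add_one_le h)

theorem exists_reflTransGen_of_Dh_ne_top {s : α → α → Prop} {P : α → Prop}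
    (hsr : ∀ a b, s a b → r a b) (hP : ∀ a, ¬ P a → ∃ b, s a b) {a : α} (ha : Dh r a ≠ ⊤) :
    ∃ b, P b ∧ Relation.ReflTransGen s a b := by
  induction hd : Dh r a using WellFoundedLT.induction generalizing a with
  | _ d ih =>
    by_cases h : P a
    · exact ⟨a, h, .refl⟩
    obtain ⟨b, hab⟩ := hP a h
    have hlt := Dh_lt_of_rel (hsr a b hab) ha
    obtain ⟨c, hc, hbc⟩ := ih _ (hd ▸ hlt) hlt.ne_top rfl
    exact ⟨c, hc, .head hab hbc⟩

theorem Dh_ne_top_of_acc (hfin : ∀ a, {b | r a b}.Finite) {a : α} (ha : Acc (flip r) a) :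
    Dh r a ≠ ⊤ := by
  induction ha with
  | intro a _ ih =>
    set M := (hfin a).toFinset.sup (Dh r)
    have hM : M < ⊤ := (Finset.sup_lt_iff bot_lt_top).mpr fun b hb =>
      lt_top_iff_ne_top.mpr (ih b ((hfin a).mem_toFinset.mp hb))
    have hDh : Dh r a ≤ M + 1 := Dh_le_iff.mpr fun n c hn => by
      cases n with
      | zero => simp
      | succ n =>
        obtain ⟨b, hab, hbc⟩ := hn
        have hbM : Dh r b ≤ M := Finset.le_sup ((hfin a).mem_toFinset.mpr hab)
        push_cast
        exact add_le_add_left ((le_Dh_of_iterRel hbc).trans hbM) 1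
    exact ne_top_of_le_ne_top (by simpa using hM.ne) hDh

end DerivationHeight

section Terms

theorem Term.induction_on_args {P : Term σ V → Prop} (var : ∀ x, P (.var x))
    (fn : ∀ f ts, (∀ t ∈ ts, P t) → P (.fn f ts)) : ∀ t, P t
  | .var x => var x
  | .fn f ts => fn f ts fun t _ => Term.induction_on_args var fn t

theorem Term.substList_eq_map (θ : V → Term σ V) (ts : List (Term σ V)) :
    Term.substList θ ts = ts.map (Term.subst θ) := by
  induction ts with
  | nil => rfl
  | cons t ts ih => rw [Term.substList, ih, List.map_cons]

theorem Term.subst_congr {θ θ' : V → Term σ V} (w : Term σ V)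
    (h : ∀ x, Term.VarIn x w → θ x = θ' x) : Term.subst θ w = Term.subst θ' w := by
  induction w using Term.induction_on_args with
  | var x => exact h x .var
  | fn f ts ih =>
    simp only [Term.subst, Term.substList_eq_map]
    exact congrArg _ (List.map_congr_left fun t ht => ih t ht fun x hx => h x (.fn ht hx))

theorem Term.eq_of_subst_eq {θ θ' : V → Term σ V} (w : Term σ V)
    (h : Term.subst θ w = Term.subst θ' w) {x : V} (hx : Term.VarIn x w) : θ x = θ' x := by
  induction w using Term.induction_on_args with
  | var y => cases hx; exact h
  | fn f ts ih =>
    cases hx with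
    | fn ht hxt =>
      simp only [Term.subst, Term.substList_eq_map, Term.fn.injEq, List.map_inj_left] at h
      exact ih _ ht (h.2 _ ht) hxt

theorem Term.subtermAt_fn_cons_eq_some {f : σ} {ts : List (Term σ V)} {i : ℕ} {π : List ℕ}
    {u : Term σ V} :
    (Term.fn f ts).subtermAt (i :: π) = some u ↔ ∃ a, ts[i]? = some a ∧ a.subtermAt π = some u := by
  rw [Term.subtermAt]
  cases ts[i]? <;> simp

theorem Term.exists_replaceAt_eq_some {π : List ℕ} {t u : Term σ V} (s : Term σ V)
    (h : t.subtermAt π = some u) : ∃ t', t.replaceAt π s = some t' := by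
  induction π generalizing t with
  | nil => exact ⟨s, rfl⟩
  | cons i π ih =>
    cases t with
    | var x => simp [Term.subtermAt] at h
    | fn f ts =>
      obtain ⟨a, ha, hau⟩ := Term.subtermAt_fn_cons_eq_some.mp h
      obtain ⟨a', ha'⟩ := ih hau
      exact ⟨.fn f (ts.set i a'), by simp only [Term.replaceAt, ha, ha']⟩

theorem Term.finite_positions (t : Term σ V) : {π | ∃ u, t.subtermAt π = some u}.Finite := by
  induction t using Term.induction_on_args with
  | var x =>
    refine (Set.finite_singleton []).subset ?_
    rintro (_ | ⟨i, π⟩) ⟨u, hu⟩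
    · rfl
    · simp [Term.subtermAt] at hu
  | fn f ts ih =>
    refine (((Set.finite_Iio ts.length).biUnion fun i _ => (List.finite_toSet ts).biUnion
      fun a ha => (ih a ha).image (List.cons i)).insert []).subset ?_
    rintro (_ | ⟨i, π⟩) ⟨u, hu⟩
    · exact Set.mem_insert _ _
    · obtain ⟨a, ha, hau⟩ := Term.subtermAt_fn_cons_eq_some.mp hu
      refine Set.mem_insert_of_mem _ (Set.mem_biUnion (List.getElem?_eq_some_iff.mp ha).1
        (Set.mem_biUnion (List.mem_of_getElem? ha) ⟨π, ⟨u, hau⟩, rfl⟩))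

end Terms

section Rewriting

variable {R : Set (Rule σ V)}

theorem exists_lhs_eq_fn (hR : IsWfTRS R) {r : Rule σ V} (hr : r ∈ R) :
    ∃ f ts, r.lhs = .fn f ts := by
  cases h : r.lhs with
  | var x => exact absurd ⟨x, h⟩ (hR.2.1 r hr)
  | fn f ts => exact ⟨f, ts, rfl⟩

theorem subst_rhs_eq_of_subst_lhs_eq (hR : IsWfTRS R) {r : Rule σ V} (hr : r ∈ R)
    {θ θ' : V → Term σ V} (h : Term.subst θ r.lhs = Term.subst θ' r.lhs) :
    Term.subst θ r.rhs = Term.subst θ' r.rhs :=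
  Term.subst_congr _ fun x hx => Term.eq_of_subst_eq _ h (hR.2.2 r hr x hx)

theorem hasDefinedRoot_fn_iff {f : σ} {ts : List (Term σ V)} :
    HasDefinedRoot R (.fn f ts) ↔ Defined R f := by
  constructor
  · rintro ⟨g, us, h, hg⟩
    cases h
    exact hg
  · exact fun h => ⟨f, ts, rfl, h⟩

theorem IsRedex.hasDefinedRoot (hR : IsWfTRS R) {t : Term σ V} (h : IsRedex R t) :
    HasDefinedRoot R t := by
  obtain ⟨r, hr, θ, rfl⟩ := h
  obtain ⟨f, ts, hlhs⟩ := exists_lhs_eq_fn hR hr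
  rw [hlhs, Term.subst]
  exact ⟨f, _, rfl, r, hr, ts, hlhs⟩

theorem normalForm_iff {t : Term σ V} :
    NormalForm R t ↔ ∀ π u, t.subtermAt π = some u → ¬ IsRedex R u := by
  constructor
  · rintro hnf π u hu ⟨r, hr, θ, rfl⟩
    obtain ⟨t', ht'⟩ := Term.exists_replaceAt_eq_some (Term.subst θ r.rhs) hu
    exact hnf ⟨t', π, r, hr, θ, hu, ht'⟩
  · rintro h ⟨t', π, r, hr, θ, hu, -⟩
    exact h π _ hu ⟨r, hr, θ, rfl⟩

theorem normalForm_var (hR : IsWfTRS R) (x : V) : NormalForm R (.var x : Term σ V) := by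
  rw [normalForm_iff]
  rintro (_ | ⟨i, π⟩) u hu hred
  · obtain ⟨f, ts, h, -⟩ := hred.hasDefinedRoot hR
    simp only [Term.subtermAt, Option.some.injEq] at hu
    rw [← hu] at h
    cases h
  · simp [Term.subtermAt] at hu

theorem ParInnermost.transGen {s t : Term σ V} (h : ParInnermost R s t) :
    Relation.TransGen (InnermostRewrite R) s t := by
  cases h with
  | redex htg _ _ => exact htg
  | congr _ _ _ htg _ _ => exact htg

theorem NormalForm.not_parInnermost {s t : Term σ V} (hs : NormalForm R s) :
    ¬ ParInnermost R s t := fun h => by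
  obtain ⟨u, ⟨π, r, hr, θ, hsub, -, hrep⟩, -⟩ := Relation.TransGen.head'_iff.mp h.transGen
  exact hs ⟨u, π, r, hr, θ, hsub, hrep⟩

theorem IsInnermostRedex.normalForm_of_mem {f : σ} {ts : List (Term σ V)}
    (h : IsInnermostRedex R (.fn f ts)) {a : Term σ V} (ha : a ∈ ts) : NormalForm R a := by
  obtain ⟨i, hi⟩ := List.mem_iff_getElem?.mp ha
  refine normalForm_iff.mpr fun π u hu => h.2 (i :: π) (List.cons_ne_nil _ _) u ?_
  exact Term.subtermAt_fn_cons_eq_some.mpr ⟨a, hi, hu⟩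

theorem IsInnermostRedex.argNF (hR : IsWfTRS R) {t : Term σ V} (h : IsInnermostRedex R t) :
    ArgNF R t := by
  obtain ⟨f, ts, rfl, -⟩ := h.1.hasDefinedRoot hR
  exact .inr ⟨f, ts, rfl, fun _ => h.normalForm_of_mem⟩

theorem isInnermostRedex_fn_of_not_normalForm {f : σ} {ts : List (Term σ V)}
    (hargs : ∀ a ∈ ts, NormalForm R a) (hnf : ¬ NormalForm R (.fn f ts)) :
    IsInnermostRedex R (.fn f ts) := by
  have hbelow : ∀ π, π ≠ [] → ∀ u, (Term.fn f ts).subtermAt π = some u → ¬ IsRedex R u := by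
    rintro (_ | ⟨i, π⟩) hπ u hu
    · exact absurd rfl hπ
    · obtain ⟨a, ha, hau⟩ := Term.subtermAt_fn_cons_eq_some.mp hu
      exact normalForm_iff.mp (hargs a (List.mem_of_getElem? ha)) π u hau
  obtain ⟨π, u, hu, hred⟩ : ∃ π u, (Term.fn f ts).subtermAt π = some u ∧ IsRedex R u := by
    simpa [normalForm_iff] using hnf
  obtain rfl | hπ := eq_or_ne π []
  · simp only [Term.subtermAt, Option.some.injEq] at hu
    subst hu
    exact ⟨hred, hbelow⟩
  · exact absurd hred (hbelow π hπ u hu)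

theorem IsInnermostRedex.exists_innermostRewrite {t : Term σ V} (h : IsInnermostRedex R t) :
    ∃ t', InnermostRewrite R t t' := by
  obtain ⟨r, hr, θ, rfl⟩ := h.1
  exact ⟨Term.subst θ r.rhs, [], r, hr, θ, rfl, h, rfl⟩

theorem InnermostRewrite.fn_append {a b : Term σ V} (h : InnermostRewrite R a b) (f : σ)
    (pre post : List (Term σ V)) :
    InnermostRewrite R (.fn f (pre ++ a :: post)) (.fn f (pre ++ b :: post)) := by
  obtain ⟨π, r, hr, θ, hsub, hin, hrep⟩ := h
  refine ⟨pre.length :: π, r, hr, θ, ?_, hin, ?_⟩ <;>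
    simp [Term.subtermAt, Term.replaceAt, hsub, hrep]

theorem transGen_innermostRewrite_fn_append {a b : Term σ V}
    (h : Relation.TransGen (InnermostRewrite R) a b) (f : σ) (pre post : List (Term σ V)) :
    Relation.TransGen (InnermostRewrite R)
      (.fn f (pre ++ a :: post)) (.fn f (pre ++ b :: post)) := by
  induction h with
  | single hab => exact .single (hab.fn_append f pre post)
  | tail _ hbc ih => exact ih.tail (hbc.fn_append f pre post)

end Rewriting

section ParallelSteps

variable {R : Set (Rule σ V)}

/-- The condition on each argument in case (b) of `⇉`. -/
def ArgStep (R : Set (Rule σ V)) (s t : Term σ V) : Prop :=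
  s = t ∧ NormalForm R s ∨ ParInnermost R s t

theorem ParInnermost.fn_cases {f : σ} {ss : List (Term σ V)} {w : Term σ V}
    (h : ParInnermost R (.fn f ss) w) :
    (IsInnermostRedex R (.fn f ss) ∧ InnermostRewrite R (.fn f ss) w) ∨
      ∃ ts, w = .fn f ts ∧ List.Forall₂ (ArgStep R) ss ts := by
  cases h with
  | redex _ hin hstep => exact .inl ⟨hin, hstep⟩
  | congr _ _ ts _ hlen hzip =>
    refine .inr ⟨ts, rfl, List.forall₂_iff_zip.mpr ⟨hlen, fun {a b} hab => ?_⟩⟩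
    by_cases h : a = b ∧ NormalForm R a
    · exact .inl h
    · exact .inr (hzip (a, b) hab h)

theorem ParInnermostBelow.fn_inv {f : σ} {ss : List (Term σ V)} {w : Term σ V}
    (h : ParInnermostBelow R (.fn f ss) w) :
    ∃ ts, w = .fn f ts ∧ List.Forall₂ (ArgStep R) ss ts :=
  h.1.fn_cases.resolve_left fun h' => h.2 h'.1

theorem ParInnermostBelow.exists_not_normalForm {f : σ} {ss : List (Term σ V)} {w : Term σ V}
    (h : ParInnermostBelow R (.fn f ss) w) : ∃ a ∈ ss, ¬ NormalForm R a := by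
  by_contra! hargs
  by_cases hnf : NormalForm R (.fn f ss)
  · exact hnf.not_parInnermost h.1
  · exact h.2 (isInnermostRedex_fn_of_not_normalForm hargs hnf)

theorem exists_eq_fn_of_reflTransGen_parInnermostBelow {f : σ} {ss : List (Term σ V)}
    {u : Term σ V} (h : Relation.ReflTransGen (ParInnermostBelow R) (.fn f ss) u) :
    ∃ ts, u = .fn f ts := by
  induction h with
  | refl => exact ⟨ss, rfl⟩
  | tail _ hstep ih =>
    obtain ⟨ts, rfl⟩ := ih
    obtain ⟨ts', rfl, -⟩ := hstep.fn_inv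
    exact ⟨ts', rfl⟩

theorem eq_or_transGen_fn_of_forall₂_argStep (f : σ) {ss ts : List (Term σ V)}
    (h : List.Forall₂ (ArgStep R) ss ts) (pre : List (Term σ V)) :
    (ss = ts ∧ ∀ a ∈ ss, NormalForm R a) ∨
      Relation.TransGen (InnermostRewrite R) (.fn f (pre ++ ss)) (.fn f (pre ++ ts)) := by
  induction h generalizing pre with
  | nil => exact .inl ⟨rfl, by simp⟩
  | @cons s t ss ts hst _ ih =>
    have ih' := ih (pre ++ [t])
    simp only [List.append_assoc, List.singleton_append] at ih'
    rcases hst with ⟨rfl, hs⟩ | hst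
    · rcases ih' with ⟨rfl, hnf⟩ | htg
      · exact .inl ⟨rfl, List.forall_mem_cons.mpr ⟨hs, hnf⟩⟩
      · exact .inr htg
    · have hhead := transGen_innermostRewrite_fn_append hst.transGen f pre ss
      rcases ih' with ⟨rfl, -⟩ | htg
      · exact .inr hhead
      · exact .inr (hhead.trans htg)

theorem ParInnermost.fn_of_forall₂ (f : σ) {ss ts : List (Term σ V)}
    (h : List.Forall₂ (ArgStep R) ss ts) (hss : ∃ a ∈ ss, ¬ NormalForm R a) :
    ParInnermost R (.fn f ss) (.fn f ts) := by
  have htg : Relation.TransGen (InnermostRewrite R) (.fn f ss) (.fn f ts) := by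
    rcases eq_or_transGen_fn_of_forall₂_argStep f h [] with ⟨-, hnf⟩ | htg
    · obtain ⟨a, ha, hna⟩ := hss
      exact absurd (hnf a ha) hna
    · simpa using htg
  exact .congr f ss ts htg h.length_eq fun p hp hne => (List.forall₂_zip h hp).resolve_left hne

variable (hR : IsWfTRS R)
include hR

theorem exists_parInnermost_of_not_normalForm (t : Term σ V) (h : ¬ NormalForm R t) :
    ∃ t', ParInnermost R t t' := by
  induction t using Term.induction_on_args with
  | var x => exact absurd (normalForm_var hR x) h
  | fn f ts ih =>
    by_cases hargs : ∀ a ∈ ts, NormalForm R a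
    · have hin := isInnermostRedex_fn_of_not_normalForm hargs h
      obtain ⟨t', ht'⟩ := hin.exists_innermostRewrite
      exact ⟨t', .redex (.single ht') hin ht'⟩
    · obtain ⟨ts', hts'⟩ : ∃ ts', List.Forall₂ (ArgStep R) ts ts' := by
        refine List.exists_forall₂_of_forall_mem fun a ha => ?_
        by_cases hna : NormalForm R a
        · exact ⟨a, .inl ⟨rfl, hna⟩⟩
        · exact (ih a ha hna).imp fun _ => .inr
      push Not at hargs
      exact ⟨_, .fn_of_forall₂ f hts' hargs⟩

theorem exists_argStep (s : Term σ V) : ∃ t, ArgStep R s t := by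
  by_cases hs : NormalForm R s
  · exact ⟨s, .inl ⟨rfl, hs⟩⟩
  · exact (exists_parInnermost_of_not_normalForm hR s hs).imp fun _ => .inr

theorem exists_parInnermostBelow_of_not_argNF {t : Term σ V} (h : ¬ ArgNF R t) :
    ∃ t', ParInnermostBelow R t t' := by
  cases t with
  | var x => exact absurd (.inl ⟨x, rfl⟩) h
  | fn f ts =>
    have hts : ∃ a ∈ ts, ¬ NormalForm R a := by
      by_contra! hnf
      exact h (.inr ⟨f, ts, rfl, hnf⟩)
    obtain ⟨ts', hts'⟩ := List.exists_forall₂_of_forall_mem fun a _ => exists_argStep hR a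
    refine ⟨_, .fn_of_forall₂ f hts' hts, fun hin => ?_⟩
    obtain ⟨a, ha, hna⟩ := hts
    exact hna (hin.normalForm_of_mem ha)

theorem exists_iterRel_fn_of_mem {n : ℕ} {a b : Term σ V} (hab : iterRel (ParInnermost R) n a b)
    (f : σ) {ss : List (Term σ V)} (ha : a ∈ ss) :
    ∃ c, iterRel (ParInnermost R) n (.fn f ss) c := by
  induction n generalizing a ss with
  | zero => exact ⟨_, rfl⟩
  | succ n ih =>
    obtain ⟨a₁, haa₁, ha₁b⟩ := hab
    -- every copy of `a` among the arguments takes the step to `a₁`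
    have hstep : ∀ s, ∃ s', ArgStep R s s' ∧ (s = a → s' = a₁) := fun s => by
      by_cases hs : s = a
      · exact ⟨a₁, .inr (hs ▸ haa₁), fun _ => rfl⟩
      · exact (exists_argStep hR s).imp fun _ h => ⟨h, fun h' => absurd h' hs⟩
    choose g hg using hstep
    have hss : List.Forall₂ (ArgStep R) ss (ss.map g) :=
      List.forall₂_map_right_iff.mpr (List.forall₂_same.mpr fun s _ => (hg s).1)
    have ha₁ : a₁ ∈ ss.map g := (hg a).2 rfl ▸ List.mem_map_of_mem ha
    obtain ⟨c, hc⟩ := ih ha₁b ha₁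
    exact ⟨c, _, .fn_of_forall₂ f hss ⟨a, ha, fun hnf => hnf.not_parInnermost haa₁⟩, hc⟩

theorem Dh_le_Dh_fn_of_mem {a : Term σ V} {ss : List (Term σ V)} (ha : a ∈ ss) (f : σ) :
    Dh (ParInnermost R) a ≤ Dh (ParInnermost R) (.fn f ss) :=
  Dh_le_iff.mpr fun _ _ hab =>
    let ⟨_, hc⟩ := exists_iterRel_fn_of_mem hR hab f ha
    le_Dh_of_iterRel hc

theorem Dh_subtermAt_le {π : List ℕ} {t u : Term σ V} (h : t.subtermAt π = some u) :
    Dh (ParInnermost R) u ≤ Dh (ParInnermost R) t := by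
  induction π generalizing t with
  | nil =>
    simp only [Term.subtermAt, Option.some.injEq] at h
    rw [h]
  | cons i π ih =>
    cases t with
    | var x => simp [Term.subtermAt] at h
    | fn f ts =>
      obtain ⟨a, ha, hau⟩ := Term.subtermAt_fn_cons_eq_some.mp h
      exact (ih hau).trans (Dh_le_Dh_fn_of_mem hR (List.mem_of_getElem? ha) f)

theorem exists_maxANF {t : Term σ V} (ht : Dh (ParInnermost R) t ≠ ⊤) : ∃ b, MaxANF R t b := by
  set S := Dh (ParInnermost R) ''
    {u | ArgNF R u ∧ Relation.ReflTransGen (ParInnermostBelow R) t u}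
  obtain ⟨u, hu⟩ := exists_reflTransGen_of_Dh_ne_top (fun _ _ h => h.1)
    (fun _ h => exists_parInnermostBelow_of_not_argNF hR h) ht
  have : Nonempty S := ⟨_, u, hu, rfl⟩
  have hS : sSup S < ⊤ := by
    refine (sSup_le ?_).trans_lt (lt_top_iff_ne_top.mpr ht)
    rintro _ ⟨u, ⟨-, hu⟩, rfl⟩
    exact Dh_le_of_reflTransGen (Relation.ReflTransGen.mono (r := ParInnermostBelow R)
      (fun _ _ h => h.1) _ _ hu)
  obtain ⟨b, hb, hbS⟩ := ENat.sSup_mem_of_nonempty_of_lt_top hS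
  exact ⟨b, hb.1, hb.2, fun u hu hreach => hbS ▸ le_sSup ⟨u, ⟨hu, hreach⟩, rfl⟩⟩

theorem finite_setOf_innermostRewrite (t : Term σ V) : {u | InnermostRewrite R t u}.Finite := by
  refine (t.finite_positions.biUnion fun π _ => hR.1.biUnion fun r hr =>
    Set.Subsingleton.finite (s := {u | ∃ θ : V → Term σ V, t.subtermAt π =
      some (Term.subst θ r.lhs) ∧ t.replaceAt π (Term.subst θ r.rhs) = some u}) ?_).subset ?_
  · -- by `Var(r) ⊆ Var(ℓ)`, the contractum is determined by the redex
    rintro u₁ ⟨θ₁, hsub₁, hrep₁⟩ u₂ ⟨θ₂, hsub₂, hrep₂⟩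
    rw [hsub₁, Option.some.injEq] at hsub₂
    rwa [subst_rhs_eq_of_subst_lhs_eq hR hr hsub₂, hrep₂, Option.some.injEq, eq_comm] at hrep₁
  · rintro u ⟨π, r, hr, θ, hsub, -, hrep⟩
    exact Set.mem_biUnion ⟨_, hsub⟩ (Set.mem_biUnion hr ⟨θ, hsub, hrep⟩)

theorem finite_setOf_parInnermost (t : Term σ V) : {u | ParInnermost R t u}.Finite := by
  induction t using Term.induction_on_args with
  | var x => exact Set.finite_empty.subset fun _ hu => (normalForm_var hR x).not_parInnermost hu
  | fn f ts ih =>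
    refine ((finite_setOf_innermostRewrite hR (.fn f ts)).union
      ((List.finite_setOf_forall₂ (P := ArgStep R) (l := ts) fun s hs => ?_).image
        (Term.fn f))).subset ?_
    · exact ((ih s hs).insert s).subset fun u hu => hu.imp (fun h => h.1.symm) id
    · intro u hu
      rcases hu.fn_cases with ⟨-, h⟩ | ⟨ts', rfl, h⟩
      · exact .inl h
      · exact .inr ⟨ts', h, rfl⟩

theorem Dh_parInnermost_ne_top {t : Term σ V}
    (hfin : ¬ ∃ f : ℕ → Term σ V, f 0 = t ∧ ∀ i, ParInnermost R (f i) (f (i + 1))) :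
    Dh (ParInnermost R) t ≠ ⊤ :=
  Dh_ne_top_of_acc (finite_setOf_parInnermost hR)
    (by_contra fun h => hfin (not_acc_iff_exists_descending_chain.mp h))

end ParallelSteps

section Positions

theorem posGT_cons_cons_iff {i j : ℕ} {τ π : List ℕ} :
    PosGT (i :: τ) (j :: π) ↔ i = j ∧ PosGT τ π := by
  constructor
  · rintro ⟨ρ, hρ, h⟩
    simp only [List.cons_append, List.cons.injEq] at h
    exact ⟨h.1.symm, ρ, hρ, h.2⟩
  · rintro ⟨rfl, ρ, hρ, rfl⟩
    exact ⟨ρ, hρ, rfl⟩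

theorem posGT_nil_right {π : List ℕ} : PosGT π [] ↔ π ≠ [] :=
  ⟨fun ⟨_, hρ, h⟩ => h ▸ hρ, fun h => ⟨π, h, rfl⟩⟩

theorem not_posGT_nil_left {π : List ℕ} : ¬ PosGT [] π := by
  rintro ⟨ρ, hρ, h⟩
  exact hρ (List.append_eq_nil_iff.mp h).2

theorem PosGT.length_lt {τ π : List ℕ} (h : PosGT τ π) : π.length < τ.length := by
  obtain ⟨ρ, hρ, rfl⟩ := h
  simpa [List.length_pos_iff] using hρ

theorem posGT_of_prefix {π τ : List ℕ} (h : π <+: τ) (hne : π ≠ τ) : PosGT τ π := by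
  obtain ⟨ρ, rfl⟩ := h
  exact ⟨ρ, fun hρ => hne (by simp [hρ]), rfl⟩

theorem pairwise_inits_posGT (l : List ℕ) : l.inits.Pairwise fun a b => PosGT b a := by
  induction l with
  | nil => simp
  | cons i l ih =>
    rw [List.inits_cons, List.pairwise_cons, List.pairwise_map]
    refine ⟨fun b hb => ?_, ih.imp fun h => posGT_cons_cons_iff.mpr ⟨rfl, h⟩⟩
    obtain ⟨τ, -, rfl⟩ := List.mem_map.mp hb
    exact posGT_nil_right.mpr (List.cons_ne_nil _ _)

end Positions

section DependencyChains

variable {R : Set (Rule σ V)}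

theorem nil_mem_posD_iff {t : Term σ V} : [] ∈ PosD R t ↔ HasDefinedRoot R t := by
  simp [PosD, Term.subtermAt]

theorem cons_mem_posD_fn_iff {f : σ} {ts : List (Term σ V)} {i : ℕ} {π : List ℕ} :
    i :: π ∈ PosD R (.fn f ts) ↔ ∃ a, ts[i]? = some a ∧ π ∈ PosD R a := by
  constructor
  · rintro ⟨u, hu, hroot⟩
    obtain ⟨a, ha, hau⟩ := Term.subtermAt_fn_cons_eq_some.mp hu
    exact ⟨a, ha, u, hau, hroot⟩
  · rintro ⟨a, ha, u, hau, hroot⟩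
    exact ⟨u, Term.subtermAt_fn_cons_eq_some.mpr ⟨a, ha, hau⟩, hroot⟩

theorem finite_posD (t : Term σ V) : (PosD R t).Finite :=
  t.finite_positions.subset fun _ ⟨u, hu, _⟩ => ⟨u, hu⟩

theorem msdc_cons_iff {t : Term σ V} {π₁ : List ℕ} {rest : List (List ℕ)} :
    MSDC R t (π₁ :: rest) ↔ SDChain R t (π₁ :: rest) ∧
      ∀ π ∈ PosD R t, ¬ PosGT π π₁ ∧ (PosGT π₁ π → π ∈ rest) := by
  simp [MSDC]

theorem exists_msdc (t : Term σ V) : ∃ c, MSDC R t c := by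
  classical
  obtain hP | hP := (PosD R t).eq_empty_or_nonempty
  · exact ⟨[], ⟨by simp, List.isChain_nil⟩, .inl ⟨rfl, hP⟩⟩
  obtain ⟨π₁, hπ₁, hmax⟩ := Set.exists_max_image _ List.length (finite_posD t) hP
  -- a deepest defined position, followed by its defined proper prefixes
  set rest := (π₁.inits.filter fun π => π ∈ PosD R t ∧ π ≠ π₁).reverse
  have hrest : ∀ π ∈ rest, π ∈ PosD R t ∧ PosGT π₁ π := fun π hπ => by
    simp only [rest, List.mem_reverse, List.mem_filter, List.mem_inits, decide_eq_true_eq] at hπ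
    exact ⟨hπ.2.1, posGT_of_prefix hπ.1 hπ.2.2⟩
  refine ⟨π₁ :: rest, msdc_cons_iff.mpr ⟨⟨?_, ?_⟩, fun π hπ => ⟨?_, fun hgt => ?_⟩⟩⟩
  · rintro π (_ | ⟨_, hπ⟩)
    exacts [hπ₁, (hrest π hπ).1]
  · refine List.Pairwise.isChain (List.pairwise_cons.mpr ⟨fun π hπ => (hrest π hπ).2, ?_⟩)
    exact List.pairwise_reverse.mpr ((pairwise_inits_posGT π₁).sublist List.filter_sublist)
  · exact fun hgt => (hmax π hπ).not_gt hgt.length_lt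
  · simp only [rest, List.mem_reverse, List.mem_filter, List.mem_inits, decide_eq_true_eq]
    have ⟨ρ, _, hρ⟩ := hgt
    exact ⟨⟨ρ, hρ⟩, hπ, fun h => hgt.length_lt.ne (congrArg List.length h)⟩

theorem MSDC.nil_mem {t : Term σ V} {c : List (List ℕ)} (hc : MSDC R t c)
    (h : [] ∈ PosD R t) : [] ∈ c := by
  rcases hc.2 with ⟨-, hP⟩ | ⟨π₁, rest, rfl, hmax⟩
  · rw [hP] at h
    exact h.elim
  · obtain rfl | hπ₁ := eq_or_ne π₁ []
    · exact List.mem_cons_self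
    · exact List.mem_cons_of_mem _ ((hmax [] h).2 (posGT_nil_right.mpr hπ₁))

open Classical in
theorem SDChain.map_cons_append {f : σ} {ts : List (Term σ V)} {k : ℕ} {a : Term σ V}
    (hk : ts[k]? = some a) {c : List (List ℕ)} (hc : SDChain R a c) :
    SDChain R (.fn f ts) (c.map (k :: ·) ++ if Defined R f then [[]] else []) := by
  have hroot : ∀ π ∈ (if Defined R f then [[]] else [] : List (List ℕ)), π = [] ∧ Defined R f := by
    split_ifs <;> simp [*]
  refine ⟨fun π hπ => ?_, List.IsChain.append ?_ ?_ fun x hx y hy => ?_⟩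
  · rcases List.mem_append.mp hπ with hπ | hπ
    · obtain ⟨ρ, hρ, rfl⟩ := List.mem_map.mp hπ
      exact cons_mem_posD_fn_iff.mpr ⟨a, hk, hc.1 ρ hρ⟩
    · obtain ⟨rfl, hf⟩ := hroot π hπ
      exact nil_mem_posD_iff.mpr (hasDefinedRoot_fn_iff.mpr hf)
  · exact (List.isChain_map _).mpr (hc.2.imp fun _ _ h => posGT_cons_cons_iff.mpr ⟨rfl, h⟩)
  · split_ifs <;> simp
  · obtain ⟨rfl, -⟩ := hroot y (List.mem_of_mem_head? hy)
    obtain ⟨ρ, -, rfl⟩ := List.mem_map.mp (List.mem_of_mem_getLast? hx)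
    exact posGT_nil_right.mpr (List.cons_ne_nil _ _)

open Classical in
theorem MSDC.map_cons_append {f : σ} {ts : List (Term σ V)} {k : ℕ} {a : Term σ V}
    (hk : ts[k]? = some a) {π₁ : List ℕ} {rest : List (List ℕ)} (hc : MSDC R a (π₁ :: rest)) :
    MSDC R (.fn f ts) ((π₁ :: rest).map (k :: ·) ++ if Defined R f then [[]] else []) := by
  obtain ⟨hchain, hmax⟩ := msdc_cons_iff.mp hc
  refine msdc_cons_iff.mpr ⟨hchain.map_cons_append hk, fun π hπ => ?_⟩
  rcases π with _ | ⟨i, ρ⟩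
  · have hf := hasDefinedRoot_fn_iff.mp (nil_mem_posD_iff.mp hπ)
    exact ⟨not_posGT_nil_left, fun _ => by simp [hf]⟩
  · obtain ⟨b, hb, hρ⟩ := cons_mem_posD_fn_iff.mp hπ
    constructor
    · intro hgt
      obtain ⟨rfl, hρπ₁⟩ := posGT_cons_cons_iff.mp hgt
      obtain rfl : b = a := Option.some_injective _ (hb.symm.trans hk)
      exact (hmax ρ hρ).1 hρπ₁
    · intro hgt
      obtain ⟨rfl, hπ₁ρ⟩ := posGT_cons_cons_iff.mp hgt
      obtain rfl : b = a := Option.some_injective _ (hb.symm.trans hk)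
      exact List.mem_append_left _ (List.mem_map_of_mem ((hmax ρ hρ).2 hπ₁ρ))

end DependencyChains

section ChainBounds

variable {R : Set (Rule σ V)}

def IsMaxANFAt (R : Set (Rule σ V)) (t : Term σ V) (π : List ℕ) (b : Term σ V) : Prop :=
  ∃ u, t.subtermAt π = some u ∧ MaxANF R u b

def chainBounds (R : Set (Rule σ V)) (t : Term σ V) : Set ℕ∞ :=
  {d | ∃ c, MSDC R t c ∧ ∃ bs, List.Forall₂ (IsMaxANFAt R t) c bs ∧
    d = (bs.map (Dh (ParInnermost R))).sum}

variable (hR : IsWfTRS R)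
include hR

theorem exists_forall₂_isMaxANFAt {t : Term σ V} (ht : Dh (ParInnermost R) t ≠ ⊤)
    {c : List (List ℕ)} (hc : SDChain R t c) : ∃ bs, List.Forall₂ (IsMaxANFAt R t) c bs :=
  List.exists_forall₂_of_forall_mem fun π hπ => by
    obtain ⟨u, hu, -⟩ := hc.1 π hπ
    obtain ⟨b, hb⟩ := exists_maxANF hR (ne_top_of_le_ne_top ht (Dh_subtermAt_le hR hu))
    exact ⟨b, u, hu, hb⟩

theorem chainBounds_nonempty {t : Term σ V} (ht : Dh (ParInnermost R) t ≠ ⊤) :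
    (chainBounds R t).Nonempty := by
  obtain ⟨c, hc⟩ := exists_msdc (R := R) t
  obtain ⟨bs, hbs⟩ := exists_forall₂_isMaxANFAt hR ht hc.1
  exact ⟨_, c, hc, bs, hbs, rfl⟩

theorem exists_mem_chainBounds_ge_of_isInnermostRedex {t v : Term σ V}
    (ht : Dh (ParInnermost R) t ≠ ⊤) (hin : IsInnermostRedex R t) {n : ℕ}
    (hv : iterRel (ParInnermost R) n t v) : ∃ d ∈ chainBounds R t, (n : ℕ∞) ≤ d := by
  obtain ⟨c, hc⟩ := exists_msdc (R := R) t
  obtain ⟨bs, hbs⟩ := exists_forall₂_isMaxANFAt hR ht hc.1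
  obtain ⟨b, hb, u, hu, hbmax⟩ :=
    hbs.exists_of_mem_left (hc.nil_mem (nil_mem_posD_iff.mpr (hin.1.hasDefinedRoot hR)))
  simp only [Term.subtermAt, Option.some.injEq] at hu
  subst hu
  refine ⟨_, ⟨c, hc, bs, hbs, rfl⟩, ?_⟩
  calc (n : ℕ∞) ≤ Dh (ParInnermost R) t := le_Dh_of_iterRel hv
    _ ≤ Dh (ParInnermost R) b := hbmax.2.2 t (hin.argNF hR) .refl
    _ ≤ _ := List.le_sum_of_mem (List.mem_map_of_mem hb)

theorem exists_mem_chainBounds_fn_ge {f : σ} {ss : List (Term σ V)} {a : Term σ V} (ha : a ∈ ss)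
    (ht : Dh (ParInnermost R) (.fn f ss) ≠ ⊤) {d : ℕ∞} (hd : d ∈ chainBounds R a) (hd0 : d ≠ 0) :
    ∃ d' ∈ chainBounds R (.fn f ss), d ≤ d' ∧
      (Defined R f → ∀ u, ArgNF R u → Relation.ReflTransGen (ParInnermostBelow R) (.fn f ss) u →
        d + Dh (ParInnermost R) u ≤ d') := by
  obtain ⟨k, hk⟩ := List.mem_iff_getElem?.mp ha
  obtain ⟨c, hc, bs, hbs, rfl⟩ := hd
  obtain ⟨π₁, rest, rfl⟩ : ∃ π₁ rest, c = π₁ :: rest := by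
    rcases c with _ | ⟨π₁, rest⟩
    · cases hbs
      exact absurd rfl hd0
    · exact ⟨π₁, rest, rfl⟩
  have hmsdc := hc.map_cons_append (f := f) hk
  have hbs' : List.Forall₂ (IsMaxANFAt R (.fn f ss)) ((π₁ :: rest).map (k :: ·)) bs :=
    List.forall₂_map_left_iff.mpr <| hbs.imp fun _ _ ⟨u, hu, hb⟩ =>
      ⟨u, Term.subtermAt_fn_cons_eq_some.mpr ⟨a, hk, hu⟩, hb⟩
  by_cases hf : Defined R f
  · obtain ⟨b, hb⟩ := exists_maxANF hR ht
    rw [if_pos hf] at hmsdc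
    refine ⟨_, ⟨_, hmsdc, bs ++ [b], List.rel_append hbs' (.cons ⟨_, rfl, hb⟩ .nil), rfl⟩, ?_,
      fun _ u hu hreach => ?_⟩
    · simp
    · simpa using add_le_add le_rfl (hb.2.2 u hu hreach)
  · rw [if_neg hf, List.append_nil] at hmsdc
    exact ⟨_, ⟨_, hmsdc, bs, hbs', rfl⟩, le_rfl, fun h => absurd h hf⟩

end ChainBounds

section MainBound

variable {R : Set (Rule σ V)}

theorem iterRel_split_below_root {n : ℕ} {t t' : Term σ V}
    (h : iterRel (ParInnermost R) n t t') :
    ∃ m u, m ≤ n ∧ iterRel (ParInnermostBelow R) m t u ∧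
      (m = n ∨ IsInnermostRedex R u ∧ ∃ v, iterRel (ParInnermost R) (n - m) u v) := by
  induction n generalizing t with
  | zero => exact ⟨0, t, le_rfl, rfl, .inl rfl⟩
  | succ n ih =>
    obtain ⟨w, htw, hwt'⟩ := h
    by_cases hin : IsInnermostRedex R t
    · exact ⟨0, t, Nat.zero_le _, rfl, .inr ⟨hin, t', w, htw, hwt'⟩⟩
    · obtain ⟨m, u, hmn, hwu, hsplit⟩ := ih hwt'
      refine ⟨m + 1, u, Nat.succ_le_succ hmn, ⟨w, ⟨htw, hin⟩, hwu⟩, ?_⟩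
      rw [Nat.add_sub_add_right]
      exact hsplit.imp_left (congrArg (· + 1))

/-- Steps below the root rewrite every argument that is not a normal form. -/
theorem exists_mem_iterRel_of_iterRel_below {m : ℕ} {f : σ} {ss : List (Term σ V)}
    {u : Term σ V} (h : iterRel (ParInnermostBelow R) (m + 1) (.fn f ss) u) :
    ∃ a ∈ ss, ∃ w, iterRel (ParInnermost R) (m + 1) a w := by
  induction m generalizing ss with
  | zero =>
    obtain ⟨w, hw, -⟩ := h
    obtain ⟨ts, rfl, hts⟩ := hw.fn_inv
    obtain ⟨a, ha, hna⟩ := hw.exists_not_normalForm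
    obtain ⟨a', -, haa'⟩ := hts.exists_of_mem_left ha
    exact ⟨a, ha, a', a', haa'.resolve_left fun h => hna h.2, rfl⟩
  | succ m ih =>
    obtain ⟨w, hw, hwu⟩ := h
    obtain ⟨ts, rfl, hts⟩ := hw.fn_inv
    obtain ⟨a', ha', w, ha'w⟩ := ih hwu
    obtain ⟨a, ha, haa'⟩ := hts.exists_of_mem_right ha'
    rcases haa' with ⟨rfl, hnf⟩ | haa'
    · obtain ⟨_, hstep, -⟩ := ha'w
      exact absurd hstep hnf.not_parInnermost
    · exact ⟨a, ha, w, a', haa', ha'w⟩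

variable (hR : IsWfTRS R)
include hR

theorem exists_mem_chainBounds_ge {t : Term σ V} (ht : Dh (ParInnermost R) t ≠ ⊤) {n : ℕ}
    {t' : Term σ V} (h : iterRel (ParInnermost R) n t t') :
    ∃ d ∈ chainBounds R t, (n : ℕ∞) ≤ d := by
  induction t using Term.induction_on_args generalizing n t' with
  | var x =>
    cases n with
    | zero => exact (chainBounds_nonempty hR ht).imp fun d hd => ⟨hd, by simp⟩
    | succ n =>
      obtain ⟨w, hw, -⟩ := h
      exact absurd hw (normalForm_var hR x).not_parInnermost
  | fn f ss ih =>
    obtain ⟨m, u, hmn, hbelow, hsplit⟩ := iterRel_split_below_root h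
    cases m with
    | zero =>
      cases hbelow
      rcases hsplit with rfl | ⟨hin, v, hv⟩
      · exact (chainBounds_nonempty hR ht).imp fun d hd => ⟨hd, by simp⟩
      · exact exists_mem_chainBounds_ge_of_isInnermostRedex hR ht hin hv
    | succ m =>
      obtain ⟨a, ha, w, hw⟩ := exists_mem_iterRel_of_iterRel_below hbelow
      obtain ⟨d, hd, hmd⟩ := ih a ha (ne_top_of_le_ne_top ht (Dh_le_Dh_fn_of_mem hR ha f)) hw
      obtain ⟨d', hd', hdd', hroot⟩ := exists_mem_chainBounds_fn_ge hR ha ht hd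
        (ne_bot_of_le_ne_bot (by simp) hmd)
      refine ⟨d', hd', ?_⟩
      rcases hsplit with rfl | ⟨hin, v, hv⟩
      · exact hmd.trans hdd'
      have hreach := reflTransGen_iff_exists_iterRel.mpr ⟨_, hbelow⟩
      obtain ⟨ts, rfl⟩ := exists_eq_fn_of_reflTransGen_parInnermostBelow hreach
      calc (n : ℕ∞) = (m + 1 : ℕ) + (n - (m + 1) : ℕ) := by norm_cast; omega
        _ ≤ d + Dh (ParInnermost R) (.fn f ts) := add_le_add hmd (le_Dh_of_iterRel hv)
        _ ≤ d' :=
          hroot (hasDefinedRoot_fn_iff.mp (hin.1.hasDefinedRoot hR)) _ (hin.argNF hR) hreach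

end MainBound

/-- If all `⇉`-reductions of `t` are finite, then `Dh(t,⇉)` is at
most the maximum, over all maximal structural dependency chains `⟨π₁,…,πₖ⟩` of
`t`, of `Σᵢ Dh(⊥(t|πᵢ), ⇉)` with `⊥(t|πᵢ)` a maximal parallel argument normal
form of `t|πᵢ`. -/
theorem dh_le_max_sum_maxanf
    {σ V : Type} [Finite σ] (R : Set (Rule σ V)) (hR : IsWfTRS R)
    (t : Term σ V)
    (hfin : ¬ ∃ f : ℕ → Term σ V, f 0 = t ∧ ∀ i, ParInnermost R (f i) (f (i + 1))) :
    Dh (ParInnermost R) t ≤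
      sSup { d : ℕ∞ | ∃ c : List (List ℕ), MSDC R t c ∧
        ∃ bs : List (Term σ V),
          List.Forall₂ (fun π b => ∃ u, t.subtermAt π = some u ∧ MaxANF R u b) c bs ∧
          d = (bs.map (Dh (ParInnermost R))).sum } := by
  have ht := Dh_parInnermost_ne_top hR hfin
  refine Dh_le_iff.mpr fun n t' h => ?_
  obtain ⟨d, hd, hnd⟩ := exists_mem_chainBounds_ge hR ht h
  exact hnd.trans (le_sSup hd)

end ParallelComplexity
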